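/- arXiv:2409.01296 — 2 statements merged into one kernel-verified Lean document; each statement's English description precedes it below -/
import Mathlib

section
/- Let n and m be natural numbers such that n + 4 ≤ 3m, n ≥ 11, and n ≥ m, and suppose F_m divides F_{n+2} − 1. Then F_{n+2} − 1 = F_m · L_{n−m+2}. -/
/-- The Lucas numbers: L 0 = 2, L 1 = 1, L (n+2) = L (n+1) + L n. -/
def lucas : ℕ → ℕ
  | 0 => 2
  | 1 => 1
  | n + 2 => lucas n + lucas (n + 1)

theorem cassiniZ (k : ℕ) : ((Nat.fib (k+1):ℤ))^2 - Nat.fib k * Nat.fib (k+2) = (-1)^k := by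
  induction k with
  | zero => simp
  | succ k ih =>
    have h2 : (Nat.fib (k+2) : ℤ) = Nat.fib k + Nat.fib (k+1) := by
      rw [Nat.fib_add_two]; push_cast; ring
    have h3 : (Nat.fib (k+3) : ℤ) = Nat.fib (k+1) + Nat.fib (k+2) := by
      rw [show k+3 = (k+1)+2 from rfl, Nat.fib_add_two]; push_cast; ring
    rw [h2] at ih
    rw [show k+1+1 = k+2 from rfl, show k+1+2 = k+3 from rfl, h3, h2]
    linear_combination -ih

theorem docagneZ (p : ℕ) :
    ((Nat.fib (p+2):ℤ)) * Nat.fib (p+1) - Nat.fib (p+3) * Nat.fib p = (-1)^p := by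
  have h2 : (Nat.fib (p+2) : ℤ) = Nat.fib p + Nat.fib (p+1) := by
    rw [Nat.fib_add_two]; push_cast; ring
  have h3 : (Nat.fib (p+3) : ℤ) = Nat.fib (p+1) + Nat.fib (p+2) := by
    rw [show p+3 = (p+1)+2 from rfl, Nat.fib_add_two]; push_cast; ring
  have := cassiniZ p
  rw [h2] at this ⊢
  rw [h3, h2]
  linear_combination this

theorem lucas_eq : ∀ k, lucas (k+1) = Nat.fib k + Nat.fib (k+2)
  | 0 => rfl
  | 1 => rfl
  | (k+2) => by
    show lucas (k+1) + lucas (k+2) = _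
    rw [lucas_eq k, lucas_eq (k+1)]
    have f2 : Nat.fib (k+2) = Nat.fib k + Nat.fib (k+1) := Nat.fib_add_two
    have f3 : Nat.fib (k+3) = Nat.fib (k+1) + Nat.fib (k+2) := Nat.fib_add_two
    have f4 : Nat.fib (k+4) = Nat.fib (k+2) + Nat.fib (k+3) := Nat.fib_add_two
    simp only [show k+2+2 = k+4 from rfl, show k+1+2 = k+3 from rfl]
    omega

theorem fib_inj {a b : ℕ} (ha : 2 ≤ a) (hb : 2 ≤ b) (h : Nat.fib a = Nat.fib b) : a = b := by
  rcases lt_trichotomy a b with hl | he | hl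
  · have : Nat.fib a < Nat.fib b :=
      lt_of_lt_of_le (Nat.fib_lt_fib_succ ha) (Nat.fib_mono hl)
    omega
  · exact he
  · have : Nat.fib b < Nat.fib a :=
      lt_of_lt_of_le (Nat.fib_lt_fib_succ hb) (Nat.fib_mono hl)
    omega

/-- If n + 4 ≤ 3m, n ≥ 11, n ≥ m, and F_m divides F_{n+2} - 1
(the sum of the first n Fibonacci numbers), then the quotient is the
Lucas number L_{n-m+2}. -/
theorem fib_partial_sum_div_eq_lucas (n m : ℕ)
    (h1 : n + 4 ≤ 3 * m) (h2 : 11 ≤ n) (h3 : m ≤ n)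
    (hdvd : Nat.fib m ∣ Nat.fib (n + 2) - 1) :
    Nat.fib (n + 2) - 1 = Nat.fib m * lucas (n - m + 2) := by
  obtain ⟨a, rfl⟩ : ∃ a, m = a + 5 := ⟨m - 5, by omega⟩
  have hfm5 : 5 ≤ Nat.fib (a+5) := by
    calc 5 = Nat.fib 5 := rfl
    _ ≤ _ := Nat.fib_mono (by omega)
  have hpos : 1 ≤ Nat.fib (n+2) := Nat.fib_pos.mpr (by omega)
  have hdZ : (Nat.fib (a+5) : ℤ) ∣ (Nat.fib (n+2) : ℤ) - 1 := by
    have := Int.natCast_dvd_natCast.mpr hdvd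
    rwa [Nat.cast_sub hpos] at this
  -- Cassini at a+5 :  fib(a+6)^2 = fib(a+5)*fib(a+7) + (-1)^(a+5)
  have hc : (Nat.fib (a+6):ℤ)^2 = Nat.fib (a+5) * Nat.fib (a+7) + (-1)^(a+5) := by
    have := cassiniZ (a+5)
    rw [show a+5+1 = a+6 from rfl, show a+5+2 = a+7 from rfl] at this
    linear_combination this
  have f6 : (Nat.fib (a+6):ℤ) = Nat.fib (a+4) + Nat.fib (a+5) := by
    rw [show a+6 = (a+4)+2 from rfl, Nat.fib_add_two]; push_cast; ring
  have hmono45 : Nat.fib (a+4) < Nat.fib (a+5) := Nat.fib_lt_fib_succ (by omega)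
  by_cases hB : n + 2 < 2*(a+5)
  · -- Case B : m < n+2 < 2m
    obtain ⟨r, rfl⟩ : ∃ r, n = (a+5) + r := ⟨n - (a+5), by omega⟩
    have hrub : r ≤ a + 2 := by omega
    have hF : (Nat.fib ((a+5)+r+2):ℤ)
        = Nat.fib (a+5) * Nat.fib (r+1) + Nat.fib (a+6) * Nat.fib (r+2) := by
      rw [show (a+5)+r+2 = (a+5)+(r+1)+1 by omega, Nat.fib_add]
      push_cast; ring
    have hd1 : (Nat.fib (a+5):ℤ) ∣ (Nat.fib (a+6):ℤ) * Nat.fib (r+2) - 1 := by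
      have e : (Nat.fib (a+6):ℤ) * Nat.fib (r+2) - 1
          = ((Nat.fib ((a+5)+r+2):ℤ) - 1) - Nat.fib (a+5) * Nat.fib (r+1) := by
        rw [hF]; ring
      rw [e]; exact dvd_sub hdZ (dvd_mul_right _ _)
    have hd2 : (Nat.fib (a+5):ℤ) ∣ (-1)^(a+5) * Nat.fib (r+2) - Nat.fib (a+4) := by
      have e : ((-1:ℤ))^(a+5) * Nat.fib (r+2) - Nat.fib (a+4)
          = (Nat.fib (a+6):ℤ) * ((Nat.fib (a+6):ℤ) * Nat.fib (r+2) - 1)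
            - Nat.fib (a+5) * ((Nat.fib (a+7):ℤ) * Nat.fib (r+2) - 1) := by
        linear_combination -(Nat.fib (r+2):ℤ) * hc + f6
      rw [e]
      exact dvd_sub (Dvd.dvd.mul_left hd1 _) (dvd_mul_right _ _)
    have hrle : Nat.fib (r+2) ≤ Nat.fib (a+4) := Nat.fib_mono (by omega)
    rcases Nat.even_or_odd a with hae | hao
    · -- a even, m odd : forces r = a+1, n = 2a+6
      have hpow : ((-1:ℤ))^(a+5) = -1 := Odd.neg_one_pow (by
        rcases hae with ⟨t, ht⟩; exact ⟨t+2, by omega⟩)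
      rw [hpow] at hd2
      have hd3 : (Nat.fib (a+5):ℤ) ∣ (Nat.fib (r+2):ℤ) + Nat.fib (a+4) := by
        have := dvd_neg.mpr hd2
        have e : -((-1:ℤ) * Nat.fib (r+2) - Nat.fib (a+4))
            = (Nat.fib (r+2):ℤ) + Nat.fib (a+4) := by ring
        rwa [e] at this
      have hsum : Nat.fib (r+2) + Nat.fib (a+4) = Nat.fib (a+5) := by
        obtain ⟨c, hc2⟩ := hd3
        have h0 : (0:ℤ) < (Nat.fib (r+2):ℤ) + Nat.fib (a+4) := by
          have : 0 < Nat.fib (r+2) := Nat.fib_pos.mpr (by omega)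
          push_cast; omega
        have h2' : (Nat.fib (r+2):ℤ) + Nat.fib (a+4) < 2 * Nat.fib (a+5) := by
          push_cast; omega
        have hc1 : c = 1 := by
          rcases lt_trichotomy c 1 with h | h | h
          · exfalso; nlinarith [hc2, h0]
          · exact h
          · exfalso; nlinarith [hc2, h2']
        rw [hc1, mul_one] at hc2
        have h2c : ((Nat.fib (r+2) + Nat.fib (a+4) : ℕ) : ℤ) = (Nat.fib (a+5) : ℤ) := by
          push_cast; omega
        exact_mod_cast h2c
      have hfr : Nat.fib (r+2) = Nat.fib (a+3) := by
        have : Nat.fib (a+5) = Nat.fib (a+3) + Nat.fib (a+4) := Nat.fib_add_two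
        omega
      have hreq : r = a + 1 := by
        have := fib_inj (a := r+2) (b := a+3) (by omega) (by omega) hfr
        omega
      subst hreq
      -- identity : fib(2a+8) - 1 = fib(a+5) * lucas(a+3)
      have hidx : (a+5) + (a+1) - (a+5) + 2 = a + 3 := by omega
      rw [hidx]
      suffices h : Nat.fib ((a+5)+(a+1)+2) = Nat.fib (a+5) * lucas (a+3) + 1 by omega
      rw [show a+3 = (a+2)+1 from rfl, lucas_eq (a+2), show a+2+2 = a+4 from rfl]
      have hD := docagneZ (a+2)
      rw [show a+2+1 = a+3 from rfl, show a+2+2 = a+4 from rfl,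
        show a+2+3 = a+5 from rfl] at hD
      have hpow2 : ((-1:ℤ))^(a+2) = 1 := Even.neg_one_pow (by
        rcases hae with ⟨t, ht⟩; exact ⟨t+1, by omega⟩)
      rw [hpow2] at hD
      have hFA : (Nat.fib ((a+5)+(a+1)+2):ℤ)
          = Nat.fib (a+4) * Nat.fib (a+3) + Nat.fib (a+5) * Nat.fib (a+4) := by
        rw [show (a+5)+(a+1)+2 = (a+4)+(a+3)+1 by omega, Nat.fib_add]
        push_cast
        rw [show a+4+1 = a+5 from rfl, show a+3+1 = a+4 from rfl]
        all_goals ring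
      have : (Nat.fib ((a+5)+(a+1)+2):ℤ)
          = Nat.fib (a+5) * ((Nat.fib (a+2):ℤ) + Nat.fib (a+4)) + 1 := by
        rw [hFA]; linear_combination hD
      exact_mod_cast this
    · -- a odd, m even : forces r = a+2, n = 2a+7
      have hpow : ((-1:ℤ))^(a+5) = 1 := Even.neg_one_pow (by
        rcases hao with ⟨t, ht⟩; exact ⟨t+3, by omega⟩)
      rw [hpow, one_mul] at hd2
      have hzero : (Nat.fib (r+2):ℤ) - Nat.fib (a+4) = 0 := by
        apply Int.eq_zero_of_abs_lt_dvd hd2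
        rw [abs_sub_lt_iff]
        constructor <;> push_cast <;> omega
      have hfr : Nat.fib (r+2) = Nat.fib (a+4) := by
        have := hzero; push_cast at this; omega
      have hreq : r = a + 2 := by
        have := fib_inj (a := r+2) (b := a+4) (by omega) (by omega) hfr
        omega
      subst hreq
      -- identity : fib(2a+9) - 1 = fib(a+5) * lucas(a+4)
      have hidx : (a+5) + (a+2) - (a+5) + 2 = a + 4 := by omega
      rw [hidx]
      suffices h : Nat.fib ((a+5)+(a+2)+2) = Nat.fib (a+5) * lucas (a+4) + 1 by omega
      rw [show a+4 = (a+3)+1 from rfl, lucas_eq (a+3), show a+3+2 = a+5 from rfl]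
      have hC := cassiniZ (a+3)
      rw [show a+3+1 = a+4 from rfl, show a+3+2 = a+5 from rfl] at hC
      have hpow2 : ((-1:ℤ))^(a+3) = 1 := Even.neg_one_pow (by
        rcases hao with ⟨t, ht⟩; exact ⟨t+2, by omega⟩)
      rw [hpow2] at hC
      have hFA : (Nat.fib ((a+5)+(a+2)+2):ℤ)
          = (Nat.fib (a+4):ℤ)^2 + (Nat.fib (a+5):ℤ)^2 := by
        rw [show (a+5)+(a+2)+2 = (a+4)+(a+4)+1 by omega, Nat.fib_add]
        push_cast
        rw [show a+4+1 = a+5 from rfl]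
        ring
      have : (Nat.fib ((a+5)+(a+2)+2):ℤ)
          = Nat.fib (a+5) * ((Nat.fib (a+3):ℤ) + Nat.fib (a+5)) + 1 := by
        rw [hFA]; linear_combination hC
      exact_mod_cast this
  · -- Case A : 2m ≤ n+2 ≤ 3m-2
    obtain ⟨r, rfl⟩ : ∃ r, n = 2*(a+5) + r - 2 := ⟨n + 2 - 2*(a+5), by omega⟩
    have hrub : r ≤ a + 3 := by omega
    have hn2 : 2*(a+5) + r - 2 + 2 = 2*(a+5) + r := by omega
    rw [hn2] at hdZ hpos ⊢
    rcases Nat.eq_zero_or_pos r with hr0 | hrpos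
    · -- r = 0 : fib m ∣ fib (2m), contradiction
      subst hr0
      exfalso
      have hdd : Nat.fib (a+5) ∣ Nat.fib (2*(a+5) + 0) := by
        exact Nat.fib_dvd _ _ ⟨2, by ring⟩
      have hone : Nat.fib (a+5) ∣ 1 := by
        have hnat : Nat.fib (a+5) ∣ Nat.fib (2*(a+5)+0) - 1 := by
          have := hdvd
          rwa [show 2*(a+5)+0-2+2 = 2*(a+5)+0 by omega] at this
        have := Nat.dvd_sub hdd hnat
        rwa [show Nat.fib (2*(a+5)+0) - (Nat.fib (2*(a+5)+0) - 1) = 1 by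
          have : 1 ≤ Nat.fib (2*(a+5)+0) := Nat.fib_pos.mpr (by omega)
          omega] at this
      have := Nat.le_of_dvd one_pos hone
      omega
    · obtain ⟨s, rfl⟩ : ∃ s, r = s + 1 := ⟨r - 1, by omega⟩
      have hsub : s ≤ a + 2 := by omega
      -- fib(2m+s+1) = fib m * fib(m+s) + fib(m+1) * fib(m+s+1)
      -- fib(m+s+1)  = fib m * fib s + fib(m+1) * fib(s+1)
      have hF1 : (Nat.fib (2*(a+5)+(s+1)):ℤ)
          = Nat.fib (a+5) * Nat.fib ((a+5)+s) + Nat.fib (a+6) * Nat.fib ((a+5)+s+1) := by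
        rw [show 2*(a+5)+(s+1) = (a+5)+((a+5)+s)+1 by omega, Nat.fib_add]
        push_cast; ring
      have hF2 : (Nat.fib ((a+5)+s+1):ℤ)
          = Nat.fib (a+5) * Nat.fib s + Nat.fib (a+6) * Nat.fib (s+1) := by
        rw [show (a+5)+s+1 = (a+5)+s+1 from rfl, Nat.fib_add]
        push_cast; ring
      have hd1 : (Nat.fib (a+5):ℤ) ∣ (Nat.fib (a+6):ℤ)^2 * Nat.fib (s+1) - 1 := by
        have e : (Nat.fib (a+6):ℤ)^2 * Nat.fib (s+1) - 1
            = ((Nat.fib (2*(a+5)+(s+1)):ℤ) - 1)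
              - Nat.fib (a+5) * ((Nat.fib ((a+5)+s):ℤ) + Nat.fib (a+6) * Nat.fib s) := by
          rw [hF1, hF2]; ring
        rw [e]; exact dvd_sub hdZ (dvd_mul_right _ _)
      have hd2 : (Nat.fib (a+5):ℤ) ∣ (-1)^(a+5) * Nat.fib (s+1) - 1 := by
        have e : ((-1:ℤ))^(a+5) * Nat.fib (s+1) - 1
            = ((Nat.fib (a+6):ℤ)^2 * Nat.fib (s+1) - 1)
              - Nat.fib (a+5) * ((Nat.fib (a+7):ℤ) * Nat.fib (s+1)) := by
          linear_combination -(Nat.fib (s+1):ℤ) * hc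
        rw [e]; exact dvd_sub hd1 (dvd_mul_right _ _)
      have hsle : Nat.fib (s+1) ≤ Nat.fib (a+3) := Nat.fib_mono (by omega)
      have hm3 : Nat.fib (a+3) + 1 < Nat.fib (a+5) := by
        have e5 : Nat.fib (a+5) = Nat.fib (a+3) + Nat.fib (a+4) := Nat.fib_add_two
        have : 3 ≤ Nat.fib (a+4) := by
          calc 3 = Nat.fib 4 := rfl
          _ ≤ _ := Nat.fib_mono (by omega)
        omega
      rcases Nat.even_or_odd a with hae | hao
      · -- a even, m odd : contradiction
        exfalso
        have hpow : ((-1:ℤ))^(a+5) = -1 := Odd.neg_one_pow (by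
          rcases hae with ⟨t, ht⟩; exact ⟨t+2, by omega⟩)
        rw [hpow] at hd2
        have hd3 : (Nat.fib (a+5):ℤ) ∣ (Nat.fib (s+1):ℤ) + 1 := by
          have := dvd_neg.mpr hd2
          have e : -((-1:ℤ) * Nat.fib (s+1) - 1) = (Nat.fib (s+1):ℤ) + 1 := by ring
          rwa [e] at this
        have hzero : (Nat.fib (s+1):ℤ) + 1 = 0 := by
          apply Int.eq_zero_of_abs_lt_dvd hd3
          rw [abs_lt]
          constructor <;> push_cast <;> omega
        have : 0 ≤ (Nat.fib (s+1):ℤ) := by positivity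
        omega
      · -- a odd, m even : fib(s+1) = 1, so s = 0 or s = 1
        have hpow : ((-1:ℤ))^(a+5) = 1 := Even.neg_one_pow (by
          rcases hao with ⟨t, ht⟩; exact ⟨t+3, by omega⟩)
        rw [hpow, one_mul] at hd2
        have hzero : (Nat.fib (s+1):ℤ) - 1 = 0 := by
          apply Int.eq_zero_of_abs_lt_dvd hd2
          rw [abs_sub_lt_iff]
          constructor <;> push_cast <;> omega
        have hfs : Nat.fib (s+1) = 1 := by push_cast at hzero; omega
        have hslt : s ≤ 1 := by
          by_contra hs
          have : 2 ≤ Nat.fib (s+1) := by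
            calc 2 = Nat.fib 3 := rfl
            _ ≤ _ := Nat.fib_mono (by omega)
          omega
        interval_cases s
        · -- s = 0 : n + 2 = 2m+1,  fib(2m+1) - 1 = fib m * lucas (m+1)
          have hidx : 2*(a+5) + 1 - 2 - (a+5) + 2 = a + 6 := by omega
          rw [hidx]
          suffices h : Nat.fib (2*(a+5)+(0+1)) = Nat.fib (a+5) * lucas (a+6) + 1 by omega
          rw [show a+6 = (a+5)+1 from rfl, lucas_eq (a+5), show a+5+2 = a+7 from rfl]
          have hC := cassiniZ (a+5)
          rw [show a+5+1 = a+6 from rfl, show a+5+2 = a+7 from rfl] at hC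
          have hpow2 : ((-1:ℤ))^(a+5) = 1 := hpow
          rw [hpow2] at hC
          have hFA : (Nat.fib (2*(a+5)+(0+1)):ℤ)
              = (Nat.fib (a+5):ℤ)^2 + (Nat.fib (a+6):ℤ)^2 := by
            rw [show 2*(a+5)+(0+1) = (a+5)+(a+5)+1 by omega, Nat.fib_add]
            push_cast
            rw [show a+5+1 = a+6 from rfl]
            ring
          have : (Nat.fib (2*(a+5)+(0+1)):ℤ)
              = Nat.fib (a+5) * ((Nat.fib (a+5):ℤ) + Nat.fib (a+7)) + 1 := by
            rw [hFA]; linear_combination hC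
          exact_mod_cast this
        · -- s = 1 : n + 2 = 2m+2,  fib(2m+2) - 1 = fib m * lucas (m+2)
          have hidx : 2*(a+5) + 2 - 2 - (a+5) + 2 = a + 7 := by omega
          rw [hidx]
          suffices h : Nat.fib (2*(a+5)+(1+1)) = Nat.fib (a+5) * lucas (a+7) + 1 by omega
          rw [show a+7 = (a+6)+1 from rfl, lucas_eq (a+6), show a+6+2 = a+8 from rfl]
          have hD := docagneZ (a+5)
          rw [show a+5+1 = a+6 from rfl, show a+5+2 = a+7 from rfl,
            show a+5+3 = a+8 from rfl] at hD
          rw [hpow] at hD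
          have hFA : (Nat.fib (2*(a+5)+(1+1)):ℤ)
              = Nat.fib (a+5) * Nat.fib (a+6) + Nat.fib (a+6) * Nat.fib (a+7) := by
            rw [show 2*(a+5)+(1+1) = (a+5)+(a+6)+1 by omega, Nat.fib_add]
            push_cast
            rw [show a+5+1 = a+6 from rfl, show a+6+1 = a+7 from rfl]
            all_goals ring
          have : (Nat.fib (2*(a+5)+(1+1)):ℤ)
              = Nat.fib (a+5) * ((Nat.fib (a+6):ℤ) + Nat.fib (a+8)) + 1 := by
            rw [hFA]; linear_combination hD
          exact_mod_cast this
end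

section
/- For every natural number k ≥ 1, the sum of the first 4k Lucas numbers satisfies S^L_{4k} = L_{4k+2} − 3 = 5·F_{k+1}·F_{2k}·L_{k+1}; in particular L_{k+1} divides L_{4k+2} − 3, and k+1 is the largest such index: for every m > k+1, L_m does not divide L_{4k+2} − 3. -/
open Nat

theorem lucas_add_two (n : ℕ) : lucas (n + 2) = lucas n + lucas (n + 1) := rfl

theorem lucas_add_one (n : ℕ) : lucas (n + 1) = 2 * fib n + fib (n + 1) := by
  induction n using Nat.twoStepInduction with
  | zero => rfl
  | one => rfl
  | more n ih₁ ih₂ =>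
    rw [lucas_add_two, ih₁, ih₂, fib_add_two, fib_add_two (n := n + 1), fib_add_two (n := n)]
    ring

theorem lucas_add_fib (n : ℕ) : lucas n + fib n = 2 * fib (n + 1) := by
  cases n with
  | zero => rfl
  | succ n => rw [lucas_add_one, fib_add_two]; ring

theorem two_mul_lucas_add_one (n : ℕ) : 2 * lucas (n + 1) = lucas n + 5 * fib n := by
  have h := lucas_add_fib n
  rw [lucas_add_one]
  omega

theorem two_mul_lucas_add (a b : ℕ) :
    2 * lucas (a + b) = lucas a * lucas b + 5 * fib a * fib b := by
  induction b using Nat.twoStepInduction with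
  | zero => simp [mul_comm, show lucas 0 = 2 from rfl]
  | one => simp [two_mul_lucas_add_one, show lucas 1 = 1 from rfl]
  | more b ih₁ ih₂ =>
    rw [← add_assoc] at ih₂
    rw [← add_assoc, lucas_add_two, mul_add, ih₁, ih₂, lucas_add_two, fib_add_two]
    ring

theorem fib_mul_lucas (n : ℕ) : fib n * lucas n = fib (2 * n) := by
  cases n with
  | zero => rfl
  | succ n => rw [lucas_add_one, mul_add_one, fib_two_mul_add_two]

theorem lucas_dvd_fib_two_mul (n : ℕ) : lucas n ∣ fib (2 * n) :=
  Dvd.intro_left _ (fib_mul_lucas n)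

theorem lucas_pos (n : ℕ) : 0 < lucas n := by
  have h := lucas_add_fib n
  have : fib n ≤ fib (n + 1) := fib_le_fib_succ
  have : 0 < fib (n + 1) := fib_pos.2 n.succ_pos
  omega

theorem lucas_lt_lucas_add_one {n : ℕ} (hn : 1 ≤ n) : lucas n < lucas (n + 1) := by
  obtain ⟨n, rfl⟩ := Nat.exists_eq_add_of_le' hn
  have := lucas_pos n
  rw [lucas_add_two]
  omega

theorem lucas_strictMonoOn : StrictMonoOn lucas (Set.Ici 1) :=
  strictMonoOn_of_lt_add_one Set.ordConnected_Ici fun _ _ hn _ ↦ lucas_lt_lucas_add_one hn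

theorem lucas_le_lucas {a b : ℕ} (ha : 1 ≤ a) (hab : a ≤ b) : lucas a ≤ lucas b :=
  lucas_strictMonoOn.monotoneOn ha (ha.trans hab) hab

theorem not_five_dvd_lucas (n : ℕ) : ¬ 5 ∣ lucas n := by
  induction n with
  | zero => decide
  | succ n ih =>
    have := two_mul_lucas_add_one n
    omega

theorem fib_two_mul_mul_fib_two_mul_add_two_add_one (n : ℕ) :
    fib (2 * n) * fib (2 * n + 2) + 1 = fib (2 * n + 1) ^ 2 := by
  have h := Int.fib_succ_mul_fib_pred_sub_fib_sq (2 * n + 1 : ℕ)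
  rw [show ((2 * n + 1 : ℕ) : ℤ) + 1 = (2 * n + 2 : ℕ) by push_cast; ring,
    show ((2 * n + 1 : ℕ) : ℤ) - 1 = (2 * n : ℕ) by push_cast; ring, Int.natAbs_natCast,
    (odd_two_mul_add_one n).neg_one_pow] at h
  simp only [Int.fib_natCast] at h
  zify
  linear_combination h

theorem lucas_four_mul_add_two (k : ℕ) :
    lucas (4 * k + 2) = 5 * fib (2 * k) * fib (2 * (k + 1)) + 3 := by
  have hL : lucas (4 * k + 2) = 2 * fib (2 * (2 * k) + 1) + fib (2 * (2 * k) + 2) := by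
    rw [show 4 * k + 2 = 2 * (2 * k) + 1 + 1 by ring, lucas_add_one]
  have h := fib_two_mul_mul_fib_two_mul_add_two_add_one k
  rw [fib_add_two] at h
  rw [hL, mul_add_one, fib_two_mul_add_one, fib_two_mul_add_two, fib_add_two]
  linear_combination 3 * h.symm

theorem sum_Icc_lucas_add_three (n : ℕ) :
    ∑ i ∈ Finset.Icc 1 n, lucas i + 3 = lucas (n + 2) := by
  induction n with
  | zero => rfl
  | succ n ih => rw [Finset.sum_Icc_succ_top (by omega), lucas_add_two, ← ih]; ring

theorem gcd_lucas_fib_dvd_two (n : ℕ) : Nat.gcd (lucas n) (fib n) ∣ 2 := by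
  have h : Nat.gcd (lucas n) (fib n) ∣ 2 * fib (n + 1) :=
    lucas_add_fib n ▸ dvd_add (Nat.gcd_dvd_left _ _) (Nat.gcd_dvd_right _ _)
  exact ((fib_coprime_fib_succ n).coprime_dvd_left (Nat.gcd_dvd_right _ _)).dvd_of_dvd_mul_right h

theorem gcd_lucas_fib_two_mul_dvd_fib (m u : ℕ) :
    Nat.gcd (lucas m) (fib (2 * u)) ∣ fib (2 * Nat.gcd m u) := by
  rw [← Nat.gcd_mul_left, fib_gcd]
  exact Nat.gcd_dvd_gcd_of_dvd_left _ (lucas_dvd_fib_two_mul m)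

theorem gcd_lucas_fib_two_mul_dvd_two {m u : ℕ} (h : 2 * Nat.gcd m u ∣ m) :
    Nat.gcd (lucas m) (fib (2 * u)) ∣ 2 :=
  (Nat.dvd_gcd (Nat.gcd_dvd_left _ _)
    ((gcd_lucas_fib_two_mul_dvd_fib m u).trans (fib_dvd _ _ h))).trans (gcd_lucas_fib_dvd_two m)

theorem gcd_lucas_fib_two_mul_dvd_two_mul_lucas (m u : ℕ) :
    Nat.gcd (lucas m) (fib (2 * u)) ∣ 2 * lucas (Nat.gcd m u) := by
  set d := Nat.gcd (lucas m) (fib (2 * u))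
  set t := Nat.gcd m u
  have hd : d ∣ fib t * lucas t := fib_mul_lucas t ▸ gcd_lucas_fib_two_mul_dvd_fib m u
  have hdt : Nat.gcd d (fib t) ∣ 2 :=
    (Nat.dvd_gcd ((Nat.gcd_dvd_left _ _).trans (Nat.gcd_dvd_left _ _))
      ((Nat.gcd_dvd_right _ _).trans (fib_dvd _ _ (Nat.gcd_dvd_left m u)))).trans
      (gcd_lucas_fib_dvd_two m)
  exact (Nat.dvd_gcd_mul_gcd_iff_dvd_mul.2 hd).trans (Nat.mul_dvd_mul hdt (Nat.gcd_dvd_right _ _))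

theorem three_mul_le_of_dvd_of_not_two_mul_dvd {t m : ℕ} (ht : t ∣ m) (h2 : ¬ 2 * t ∣ m)
    (hlt : t < m) : 3 * t ≤ m := by
  obtain ⟨q, rfl⟩ := ht
  have hq : q ≠ 2 := by rintro rfl; exact h2 (by rw [mul_comm])
  have hq1 : 1 < q := by
    by_contra! hq1
    interval_cases q <;> simp at hlt
  calc 3 * t = t * 3 := mul_comm 3 t
    _ ≤ t * q := Nat.mul_le_mul_left t (by omega)

theorem exists_gcd_lucas_fib_two_mul_dvd {m u : ℕ} (hm : 3 ≤ m) (hu : 0 < u) (hum : u < m) :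
    ∃ s, s ∣ Nat.gcd m u ∧ 3 * s ≤ m ∧ (s = 1 ∨ ¬ 2 * s ∣ m) ∧
      Nat.gcd (lucas m) (fib (2 * u)) ∣ 2 * lucas s := by
  by_cases h : 2 * Nat.gcd m u ∣ m
  · exact ⟨1, one_dvd _, by omega, Or.inl rfl, gcd_lucas_fib_two_mul_dvd_two h⟩
  · have hlt : Nat.gcd m u < m := (Nat.le_of_dvd hu (Nat.gcd_dvd_right m u)).trans_lt hum
    exact ⟨Nat.gcd m u, dvd_rfl,
      three_mul_le_of_dvd_of_not_two_mul_dvd (Nat.gcd_dvd_left m u) h hlt, Or.inr h,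
      gcd_lucas_fib_two_mul_dvd_two_mul_lucas m u⟩

theorem four_mul_lucas_lt {t m : ℕ} (ht : 1 ≤ t) (htm : 3 * t ≤ m) (hm : 4 ≤ m) :
    4 * lucas t < lucas m := by
  obtain rfl | ht := ht.eq_or_lt
  · exact (show 4 * lucas 1 < lucas 4 by decide).trans_le (lucas_le_lucas (by norm_num) hm)
  · have h := lucas_lt_lucas_add_one (n := t) (by omega)
    have := lucas_pos t
    have hmono := lucas_le_lucas (a := t + 4) (by omega) (by omega : t + 4 ≤ m)
    rw [lucas_add_two (t + 2), lucas_add_two (t + 1), lucas_add_two t] at hmono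
    omega

theorem four_mul_lucas_mul_lucas_lt {a b m : ℕ} (ha : 1 ≤ a) (h : a + b + 5 ≤ m) :
    4 * (lucas a * lucas b) < lucas m := by
  have hprod := two_mul_lucas_add a b
  have hlt := lucas_lt_lucas_add_one (n := a + b) (by omega)
  have hmono := lucas_le_lucas (a := a + b + 5) (by omega) h
  rw [lucas_add_two (a + b + 3), lucas_add_two (a + b + 2), lucas_add_two (a + b + 1),
    lucas_add_two (a + b)] at hmono
  omega

theorem four_mul_lucas_mul_lucas_lt_of_coprime {a b m : ℕ} (hm : 4 ≤ m) (hab : Coprime a b)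
    (habm : a * b ∣ m) (ha3 : 3 * a ≤ m) (hb3 : 3 * b ≤ m) (ha : a = 1 ∨ ¬ 2 * a ∣ m)
    (hb : b = 1 ∨ ¬ 2 * b ∣ m) : 4 * (lucas a * lucas b) < lucas m := by
  have hab0 : 0 < a * b := Nat.pos_of_dvd_of_pos habm (by omega)
  have ha0 : 0 < a := Nat.pos_of_mul_pos_right hab0
  have hb0 : 0 < b := Nat.pos_of_mul_pos_left hab0
  obtain rfl | ha1 := eq_or_ne a 1
  · simpa [show lucas 1 = 1 from rfl] using four_mul_lucas_lt hb0 hb3 hm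
  obtain rfl | hb1 := eq_or_ne b 1
  · simpa [show lucas 1 = 1 from rfl] using four_mul_lucas_lt ha0 ha3 hm
  -- `b` divides the odd number `m / a`, and `a` divides the odd number `m / b`
  have ha_odd : ¬ 2 ∣ a := fun h ↦ hb.resolve_left hb1 ((mul_dvd_mul_right h b).trans habm)
  have hb_odd : ¬ 2 ∣ b := fun h ↦
    ha.resolve_left ha1 (mul_comm a 2 ▸ (mul_dvd_mul_left a h).trans habm)
  have hne : a ≠ b := fun h ↦ ha1 ((Nat.coprime_self a).1 (h ▸ hab))
  have hle : a * b ≤ m := Nat.le_of_dvd (by omega) habm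
  refine four_mul_lucas_mul_lucas_lt ha0 ?_
  rcases hne.lt_or_gt with h | h <;> nlinarith [show 3 ≤ a by omega, show 3 ≤ b by omega]

theorem not_lucas_dvd_fib_two_mul_mul_fib_two_mul_add_two {k m : ℕ} (hk : 0 < k)
    (hkm : k + 1 < m) (hm : 4 ≤ m) : ¬ lucas m ∣ fib (2 * k) * fib (2 * (k + 1)) := by
  intro hdvd
  obtain ⟨a, hak, ha3, ha, hda⟩ :=
    exists_gcd_lucas_fib_two_mul_dvd (m := m) (u := k) (by omega) hk (by omega)
  obtain ⟨b, hbk, hb3, hb, hdb⟩ :=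
    exists_gcd_lucas_fib_two_mul_dvd (m := m) (u := k + 1) (by omega) k.succ_pos hkm
  have hab : Coprime a b :=
    Nat.Coprime.of_dvd (hak.trans (Nat.gcd_dvd_right m k)) (hbk.trans (Nat.gcd_dvd_right m (k + 1)))
      (Nat.coprime_self_add_right.2 (Nat.coprime_one_right k))
  have habm : a * b ∣ m := hab.mul_dvd_of_dvd_of_dvd (hak.trans (Nat.gcd_dvd_left m k))
    (hbk.trans (Nat.gcd_dvd_left m (k + 1)))
  have hle : lucas m ≤ 4 * (lucas a * lucas b) := by
    refine Nat.le_of_dvd (Nat.mul_pos four_pos (Nat.mul_pos (lucas_pos a) (lucas_pos b))) ?_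
    calc lucas m ∣ Nat.gcd (lucas m) (fib (2 * k)) * Nat.gcd (lucas m) (fib (2 * (k + 1))) :=
          Nat.dvd_gcd_mul_gcd_iff_dvd_mul.2 hdvd
      _ ∣ 2 * lucas a * (2 * lucas b) := mul_dvd_mul hda hdb
      _ = 4 * (lucas a * lucas b) := by ring
  exact hle.not_gt (four_mul_lucas_mul_lucas_lt_of_coprime hm hab habm ha3 hb3 ha hb)

/-- The sum of the first 4k Lucas numbers equals
L_{4k+2} - 3 = 5 * F_{k+1} * F_{2k} * L_{k+1}; in particular L_{k+1} divides it,
and k+1 is the largest index of a Lucas number dividing it. -/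
theorem lucas_partial_sum_4k (k : ℕ) (hk : 1 ≤ k) :
    (∑ i ∈ Finset.Icc 1 (4 * k), lucas i) = lucas (4 * k + 2) - 3 ∧
    lucas (4 * k + 2) - 3 = 5 * Nat.fib (k + 1) * Nat.fib (2 * k) * lucas (k + 1) ∧
    lucas (k + 1) ∣ lucas (4 * k + 2) - 3 ∧
    (∀ m : ℕ, k + 1 < m → ¬ lucas m ∣ lucas (4 * k + 2) - 3) := by
  have hN : lucas (4 * k + 2) - 3 = 5 * fib (2 * k) * fib (2 * (k + 1)) := by
    have := lucas_four_mul_add_two k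
    omega
  have hfactor : lucas (4 * k + 2) - 3 = 5 * fib (k + 1) * fib (2 * k) * lucas (k + 1) := by
    rw [hN, ← fib_mul_lucas (k + 1)]
    ring
  refine ⟨by have := sum_Icc_lucas_add_three (4 * k); omega, hfactor,
    hfactor ▸ dvd_mul_left _ _, fun m hkm hdvd ↦ ?_⟩
  have hcop : Coprime (lucas m) 5 :=
    ((Nat.Prime.coprime_iff_not_dvd Nat.prime_five).2 (not_five_dvd_lucas m)).symm
  rw [hN, mul_assoc] at hdvd
  replace hdvd := hcop.dvd_of_dvd_mul_left hdvd
  obtain rfl | hm := (show m = 3 ∨ 4 ≤ m by omega)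
  · obtain rfl : k = 1 := by omega
    exact absurd hdvd (by decide)
  · exact not_lucas_dvd_fib_two_mul_mul_fib_two_mul_add_two hk hkm hm hdvd
end
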